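/- arXiv:2101.10405 — 3 statements merged into one kernel-verified Lean document; each statement's English description precedes it below -/
import Mathlib

section
/- For a 3×3 real skew-symmetric matrix F with F² = diag(0, -λ², -λ²) for some λ ∈ ℝ, we have F = ⋆((λ,0,0)) or F = -⋆((λ,0,0)). -/
open Matrix

def hat (ω : Fin 3 → ℝ) : Matrix (Fin 3) (Fin 3) ℝ :=
  !![0, -ω 2, ω 1; ω 2, 0, -ω 0; -ω 1, ω 0, 0]

/-! A skew-symmetric `F` is `⋆ω` for `ω = (F₂₁, F₀₂, F₁₀)`, and `(⋆ω)² = ω ωᵀ - |ω|² I`.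
The diagonal entry `0` of `F²` then gives `ω₁ = ω₂ = 0`, and the entry `1` gives `ω₀² = λ²`. -/

theorem hat_neg (ω : Fin 3 → ℝ) : hat (-ω) = -hat ω := by
  ext i j
  fin_cases i <;> fin_cases j <;> simp [hat]

theorem eq_hat_of_transpose_eq_neg {F : Matrix (Fin 3) (Fin 3) ℝ} (hF : Fᵀ = -F) :
    F = hat ![F 2 1, F 0 2, F 1 0] := by
  have h i j : F j i = -F i j := congr_fun (congr_fun hF i) j
  ext i j
  fin_cases i <;> fin_cases j <;> simp [hat] <;>
    linarith [h 0 0, h 1 1, h 2 2, h 0 1, h 0 2, h 1 2]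

theorem hat_mul_hat (ω : Fin 3 → ℝ) : hat ω * hat ω = vecMulVec ω ω - (ω ⬝ᵥ ω) • 1 := by
  ext i j
  fin_cases i <;> fin_cases j <;>
    simp [hat, vecMulVec, dotProduct, Fin.sum_univ_three, mul_apply] <;> ring

theorem hat_mul_hat_apply_self (ω : Fin 3 → ℝ) (i : Fin 3) :
    (hat ω * hat ω) i i = ω i ^ 2 - ω ⬝ᵥ ω := by
  simp [hat_mul_hat, vecMulVec_apply, sq]

theorem stmt12 (F : Matrix (Fin 3) (Fin 3) ℝ) (hskew : Fᵀ = -F) (lam : ℝ)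
    (hsq : F * F = Matrix.diagonal ![0, -lam ^ 2, -lam ^ 2]) :
    F = hat ![lam, 0, 0] ∨ F = -hat ![lam, 0, 0] := by
  rw [eq_hat_of_transpose_eq_neg hskew] at hsq ⊢
  set ω : Fin 3 → ℝ := ![F 2 1, F 0 2, F 1 0]
  have h0 : ω 0 ^ 2 - ω ⬝ᵥ ω = 0 := by
    simpa [hat_mul_hat_apply_self] using congr_fun (congr_fun hsq 0) 0
  have h1 : ω 1 ^ 2 - ω ⬝ᵥ ω = -lam ^ 2 := by
    simpa [hat_mul_hat_apply_self] using congr_fun (congr_fun hsq 1) 1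
  simp only [dotProduct, Fin.sum_univ_three] at h0 h1
  have hω1 : ω 1 = 0 := by nlinarith
  have hω2 : ω 2 = 0 := by nlinarith
  rcases sq_eq_sq_iff_eq_or_eq_neg.mp (by nlinarith : ω 0 ^ 2 = lam ^ 2) with hω0 | hω0
  · left
    congr 1
    ext i; fin_cases i <;> simp [hω0, hω1, hω2]
  · right
    rw [← hat_neg]
    congr 1
    ext i; fin_cases i <;> simp [hω0, hω1, hω2]
end

section
/- For ω ∈ ℝ³ with θ = ‖ω‖, the matrix exponential of ⋆(ω) is given by the Rodrigues formula: exp(⋆(ω)) = I + sinc(θ) ⋆(ω) + (1/2) (sinc(θ/2))² ⋆(ω)², where sinc(x) = sin(x)/x for x ≠ 0 and sinc(0) = 1. -/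
/-!
Since `hat ω ^ 3 = -θ² • hat ω`, the odd powers of `hat ω` collapse to `(-θ²)ⁿ • hat ω` and the
even ones to `(-θ²)ⁿ • hat ω ^ 2`. Splitting the exponential series into even and odd terms
therefore leaves two scalar series, those of `sin θ / θ = sinc θ` and of
`(1 - cos θ) / θ² = ½ sinc (θ / 2)²`.
-/

open Matrix

noncomputable def sinc (x : ℝ) : ℝ := if x = 0 then 1 else Real.sin x / x

open scoped Nat

lemma hasSum_sinc (θ : ℝ) :
    HasSum (fun n : ℕ => (-θ ^ 2) ^ n / (2 * n + 1)!) (sinc θ) := by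
  rcases eq_or_ne θ 0 with rfl | hθ
  · have h : sinc 0 = (-(0 : ℝ) ^ 2) ^ 0 / (2 * 0 + 1)! := by simp [sinc]
    rw [h]
    exact hasSum_single 0 fun n hn => by simp [hn]
  · rw [sinc, if_neg hθ]
    refine ((Real.hasSum_sin θ).div_const θ).congr_fun fun n => ?_
    rw [neg_pow, ← pow_mul, pow_succ]
    field_simp

lemma half_mul_sinc_half_sq_eq_one_sub_cos_div_sq {θ : ℝ} (hθ : θ ≠ 0) :
    1 / 2 * sinc (θ / 2) ^ 2 = (1 - Real.cos θ) / θ ^ 2 := by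
  rw [sinc, if_neg (by positivity), div_pow, Real.sin_sq_eq_half_sub,
    show 2 * (θ / 2) = θ by ring]
  field_simp

lemma hasSum_half_mul_sinc_half_sq (θ : ℝ) :
    HasSum (fun n : ℕ => (-θ ^ 2) ^ n / (2 * n + 2)!) (1 / 2 * sinc (θ / 2) ^ 2) := by
  rcases eq_or_ne θ 0 with rfl | hθ
  · have h : 1 / 2 * sinc (0 / 2) ^ 2 = (-(0 : ℝ) ^ 2) ^ 0 / (2 * 0 + 2)! := by simp [sinc]
    rw [h]
    exact hasSum_single 0 fun n hn => by simp [hn]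
  · have hcos : HasSum (fun n : ℕ => (-1) ^ (n + 1) * θ ^ (2 * (n + 1)) / (2 * (n + 1))!)
        (Real.cos θ - 1) := by
      simpa using (hasSum_nat_add_iff' 1).2 (Real.hasSum_cos θ)
    rw [half_mul_sinc_half_sq_eq_one_sub_cos_div_sq hθ,
      show (1 - Real.cos θ) / θ ^ 2 = (Real.cos θ - 1) / -θ ^ 2 by ring]
    refine (hcos.div_const (-θ ^ 2)).congr_fun fun n => ?_
    rw [neg_pow, ← pow_mul, mul_add_one, pow_succ, pow_add]
    field_simp

section PowThree

variable {R 𝔸 : Type*} [CommSemiring R] [Semiring 𝔸] [Algebra R 𝔸] {c : R} {A : 𝔸}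

lemma pow_two_mul_add_one_of_pow_three_eq (hA : A ^ 3 = c • A) (n : ℕ) :
    A ^ (2 * n + 1) = c ^ n • A := by
  induction n with
  | zero => simp
  | succ n ih =>
    rw [show 2 * (n + 1) + 1 = 2 * n + 1 + 2 by ring, pow_add, ih, smul_mul_assoc, ← pow_succ',
      hA, smul_smul, pow_succ]

lemma pow_two_mul_add_two_of_pow_three_eq (hA : A ^ 3 = c • A) (n : ℕ) :
    A ^ (2 * n + 2) = c ^ n • A ^ 2 := by
  rw [pow_succ, pow_two_mul_add_one_of_pow_three_eq hA, smul_mul_assoc, ← sq]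

end PowThree

theorem NormedSpace.exp_eq_of_pow_three_eq_neg_sq_smul {𝔸 : Type*} [Ring 𝔸] [Algebra ℝ 𝔸]
    [TopologicalSpace 𝔸] [IsTopologicalRing 𝔸] [ContinuousSMul ℝ 𝔸] [T2Space 𝔸] {A : 𝔸} {θ : ℝ}
    (hA : A ^ 3 = (-θ ^ 2) • A) :
    NormedSpace.exp A = 1 + sinc θ • A + (1 / 2 * sinc (θ / 2) ^ 2) • A ^ 2 := by
  have hodd : HasSum (fun n : ℕ => ((2 * n + 1)!⁻¹ : ℝ) • A ^ (2 * n + 1)) (sinc θ • A) := by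
    refine ((hasSum_sinc θ).smul_const A).congr_fun fun n => ?_
    rw [pow_two_mul_add_one_of_pow_three_eq hA, smul_smul, div_eq_inv_mul]
  have heven : HasSum (fun n : ℕ => ((2 * n)!⁻¹ : ℝ) • A ^ (2 * n))
      ((1 / 2 * sinc (θ / 2) ^ 2) • A ^ 2 + 1) := by
    have hshift : HasSum (fun n : ℕ => ((2 * (n + 1))!⁻¹ : ℝ) • A ^ (2 * (n + 1)))
        ((1 / 2 * sinc (θ / 2) ^ 2) • A ^ 2) := by
      refine ((hasSum_half_mul_sinc_half_sq θ).smul_const (A ^ 2)).congr_fun fun n => ?_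
      rw [mul_add_one, pow_two_mul_add_two_of_pow_three_eq hA, smul_smul, div_eq_inv_mul]
    simpa using (hasSum_nat_add_iff (f := fun n => ((2 * n)!⁻¹ : ℝ) • A ^ (2 * n)) 1).1 hshift
  rw [congrFun (NormedSpace.exp_eq_tsum ℝ) A,
    (HasSum.even_add_odd (f := fun n => (n !⁻¹ : ℝ) • A ^ n) heven hodd).tsum_eq]
  abel

lemma hat_pow_three (ω : Fin 3 → ℝ) : hat ω ^ 3 = (-(ω ⬝ᵥ ω)) • hat ω := by
  ext i j
  fin_cases i <;> fin_cases j <;>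
    simp [hat, pow_succ, Matrix.mul_apply, dotProduct, Fin.sum_univ_three] <;> ring

theorem stmt13 (ω : Fin 3 → ℝ) (θ : ℝ) (hθ : θ = Real.sqrt (ω ⬝ᵥ ω)) :
    NormedSpace.exp (hat ω)
      = 1 + sinc θ • hat ω + ((1 / 2) * (sinc (θ / 2)) ^ 2) • (hat ω * hat ω) := by
  have hθ_sq : θ ^ 2 = ω ⬝ᵥ ω := by
    rw [hθ, Real.sq_sqrt]
    simpa using dotProduct_self_star_nonneg ω
  rw [← sq]
  exact NormedSpace.exp_eq_of_pow_three_eq_neg_sq_smul (by rw [hat_pow_three, hθ_sq])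
end

section
/- Let P be a real symmetric n×n matrix that equals W² for some real skew-symmetric W. Then every strictly negative eigenvalue of P has even multiplicity. -/
open Matrix

lemma even_finrank_of_sq_neg_one (V : Type) [AddCommGroup V] [Module ℝ V]
    [FiniteDimensional ℝ V] (f : Module.End ℝ V) (hf : f * f = -1) :
    Even (Module.finrank ℝ V) := by
  let φ : ℂ →ₐ[ℝ] Module.End ℝ V := Complex.liftAux f hf
  letI : Module ℂ V := Module.compHom V φ.toRingHom
  haveI : IsScalarTower ℝ ℂ V := ⟨fun r z v => by
    show φ (r • z) v = r • φ z v
    rw [_root_.map_smul]; rfl⟩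
  have h := Module.finrank_mul_finrank ℝ ℂ V
  rw [Complex.finrank_real_complex] at h
  exact ⟨Module.finrank ℂ V, by omega⟩

theorem stmt16 (n : ℕ) (W P : Matrix (Fin n) (Fin n) ℝ) (hskew : Wᵀ = -W)
    (hP : P = W * W) (μ : ℝ) (hμ : μ < 0) :
    Even (Module.finrank ℝ ↥(LinearMap.ker (Matrix.toLin' (P - μ • 1)))) := by
  have hcomm : (P - μ • 1) * W = W * (P - μ • 1) := by
    subst hP
    simp only [sub_mul, mul_sub, Matrix.smul_mul, Matrix.mul_smul, one_mul, mul_one, mul_assoc]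
  have hmaps : ∀ x ∈ LinearMap.ker (Matrix.toLin' (P - μ • 1)),
      Matrix.toLin' W x ∈ LinearMap.ker (Matrix.toLin' (P - μ • 1)) := by
    intro x hx
    rw [LinearMap.mem_ker] at hx ⊢
    have h1 : Matrix.toLin' ((P - μ • 1) * W) x = 0 := by
      rw [hcomm, Matrix.toLin'_mul, LinearMap.comp_apply, hx, map_zero]
    rwa [Matrix.toLin'_mul, LinearMap.comp_apply] at h1
  set V := LinearMap.ker (Matrix.toLin' (P - μ • 1))
  let f : Module.End ℝ V := (Matrix.toLin' W).restrict hmaps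
  have hf2 : f * f = (μ : ℝ) • 1 := by
    apply LinearMap.ext
    intro x
    apply Subtype.ext
    have hx : Matrix.toLin' (P - μ • 1) x.1 = 0 := x.2
    have h1 : Matrix.toLin' (P - μ • 1) x.1 = Matrix.toLin' P x.1 - μ • x.1 := by
      rw [map_sub]
      simp only [LinearMap.sub_apply, _root_.map_smul]
      congr 1
      rw [LinearMap.smul_apply, Matrix.toLin'_one, LinearMap.id_apply]
    have hPx : Matrix.toLin' P x.1 = μ • x.1 := by
      rw [hx] at h1; exact (sub_eq_zero.mp h1.symm)
    show (((f * f) x : V) : Fin n → ℝ) = (((((μ : ℝ) • 1 : Module.End ℝ V)) x : V) : Fin n → ℝ)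
    have hl : (((f * f) x : V) : Fin n → ℝ) = Matrix.toLin' W (Matrix.toLin' W x.1) := by
      simp only [Module.End.mul_apply, f, LinearMap.restrict_coe_apply]
    rw [hl, ← LinearMap.comp_apply, ← Matrix.toLin'_mul, ← hP, hPx]
    rfl
  set c := Real.sqrt (-μ) with hc
  have hcpos : 0 < c := Real.sqrt_pos.mpr (by linarith)
  have hc2 : c * c = -μ := Real.mul_self_sqrt (by linarith)
  let g : Module.End ℝ V := c⁻¹ • f
  have hg : g * g = -1 := by
    show (c⁻¹ • f) * (c⁻¹ • f) = -1
    rw [smul_mul_smul_comm, hf2, smul_smul]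
    have hval : c⁻¹ * c⁻¹ * μ = -1 := by
      field_simp
      linarith [hc2]
    rw [hval]
    module
  exact even_finrank_of_sq_neg_one V g hg
end
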